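/- Adopt the Grid setup. Then for every j ∈ {1,…,K} and l ∈ {1,…,K'}, ∫_{a_{jl}+L/(5K')}^{a_{j(l+1)}−L/(5K')} |π_{jl}(x) − 1| dx ≤ L·K·exp(−K'/30). -/

import Mathlib

open MeasureTheory

noncomputable section

/-- Width `L = (b-a)/K` of the coarse grid. -/
def gL (a b : ℝ) (K : ℕ) : ℝ := (b - a) / K

/-- Left endpoint `a_{jl} = a + (j-1)L + (l-1)L/K'` of the `(j,l)`-th subinterval
(0-indexed: `j : Fin K`, `l : Fin K'`). -/
def gA (a b : ℝ) (K K' : ℕ) (j : Fin K) (l : Fin K') : ℝ :=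
  a + (j : ℕ) * gL a b K + (l : ℕ) * gL a b K / K'

/-- Midpoint `c_{jl}` of the `(j,l)`-th subinterval. -/
def gC (a b : ℝ) (K K' : ℕ) (j : Fin K) (l : Fin K') : ℝ :=
  gA a b K K' j l + gL a b K / (2 * K')

/-- The Gaussian softmax weight `π_{jl}(x)`. -/
def gPi (a b : ℝ) (K K' : ℕ) (μ : Fin K → Fin K' → ℝ) (σ2 : ℝ)
    (j : Fin K) (l : Fin K') (x : ℝ) : ℝ :=
  Real.exp (-(x - μ j l) ^ 2 / (2 * σ2)) /
    ∑ t : Fin K, ∑ s : Fin K', Real.exp (-(x - μ t s) ^ 2 / (2 * σ2))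

end

/-!
Put `δ = L/K'`. On the middle three fifths of its cell, `x` is within `7δ/15` of `μ_{jl}` and,
since distinct cell centres are at least `δ` apart, at least `8δ/15` from every other mean.
As `σ² ≤ δ²/K'`, each other Gaussian is then at most `exp (-K'/30)` times the `(j,l)`-th one, so
`0 ≤ 1 - π_{jl}(x) ≤ K K' exp (-K'/30)`; integrating over an interval of length `3δ/5` gives
the bound `3/5 · L K exp (-K'/30)`.
-/

open Real

lemma abs_div_sum_sub_one_le {ι : Type*} [Fintype ι] {w : ι → ℝ} (hw : ∀ i, 0 < w i)
    (i₀ : ι) {e : ℝ} (he : 0 ≤ e) (hdom : ∀ i ≠ i₀, w i ≤ e * w i₀) :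
    |w i₀ / ∑ i, w i - 1| ≤ Fintype.card ι * e := by
  classical
  set S := ∑ i, w i
  have hwS : w i₀ ≤ S := Finset.single_le_sum (fun i _ => (hw i).le) (Finset.mem_univ i₀)
  have hS : 0 < S := (hw i₀).trans_le hwS
  have hrest : S - w i₀ ≤ Fintype.card ι * e * w i₀ :=
    calc S - w i₀ = ∑ i ∈ Finset.univ.erase i₀, w i :=
          sub_eq_of_eq_add (Finset.sum_erase_add _ _ (Finset.mem_univ i₀)).symm
      _ ≤ ∑ i ∈ Finset.univ.erase i₀, e * w i₀ :=
          Finset.sum_le_sum fun i hi => hdom i (Finset.ne_of_mem_erase hi)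
      _ ≤ ∑ _i : ι, e * w i₀ :=
          Finset.sum_le_sum_of_subset_of_nonneg (Finset.erase_subset _ _)
            fun _ _ _ => mul_nonneg he (hw i₀).le
      _ = Fintype.card ι * e * w i₀ := by
        rw [Finset.sum_const, Finset.card_univ, nsmul_eq_mul]; ring
  rw [div_sub_one hS.ne', abs_div, abs_of_pos hS, abs_sub_comm, abs_of_nonneg (sub_nonneg.2 hwS),
    div_le_iff₀ hS]
  calc S - w i₀ ≤ Fintype.card ι * e * w i₀ := hrest
    _ ≤ Fintype.card ι * e * S := by gcongr

lemma exp_neg_sq_div_le {σ2 y z d : ℝ} (hσ : 0 < σ2) (h : y ^ 2 + d ≤ z ^ 2) :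
    exp (-z ^ 2 / (2 * σ2)) ≤ exp (-d / (2 * σ2)) * exp (-y ^ 2 / (2 * σ2)) := by
  rw [← exp_add, exp_le_exp, ← add_div, div_le_div_iff_of_pos_right (by positivity)]
  linarith

lemma setIntegral_Ioc_le_mul_of_abs_le {f : ℝ → ℝ} {u v C : ℝ} (huv : u ≤ v)
    (hf : ∀ x ∈ Set.Ioc u v, |f x| ≤ C) : ∫ x in Set.Ioc u v, f x ≤ C * (v - u) := by
  rw [← intervalIntegral.integral_of_le huv]
  calc ∫ x in u..v, f x ≤ ‖∫ x in u..v, f x‖ := le_abs_self _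
    _ ≤ C * |v - u| :=
        intervalIntegral.norm_integral_le_of_norm_le_const (by rwa [Set.uIoc_of_le huv])
    _ = C * (v - u) := by rw [abs_of_nonneg (sub_nonneg.2 huv)]

section Grid

variable {a b : ℝ} {K K' : ℕ}

/-- The cells are enumerated left to right by `finProdFinEquiv (t, s) = s + K' * t`. -/
lemma gC_eq (t : Fin K) (s : Fin K') :
    gC a b K K' t s = a + ((finProdFinEquiv (t, s) : ℕ) + 1 / 2) * (gL a b K / K') := by
  have hK' : (K' : ℝ) ≠ 0 := Nat.cast_ne_zero.2 s.pos.ne'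
  simp only [gC, gA, finProdFinEquiv, Equiv.coe_fn_mk, Nat.cast_add, Nat.cast_mul]
  field_simp
  ring

lemma gL_div_le_abs_gC_sub (hab : a ≤ b) {t j : Fin K} {s l : Fin K'} (hne : (t, s) ≠ (j, l)) :
    gL a b K / K' ≤ |gC a b K K' t s - gC a b K K' j l| := by
  have hδ : 0 ≤ gL a b K / K' := by unfold gL; have := sub_nonneg.2 hab; positivity
  have hmn : (finProdFinEquiv (t, s) : ℕ) ≠ finProdFinEquiv (j, l) :=
    fun h => hne (finProdFinEquiv.injective (Fin.ext h))
  have hgap : (1 : ℝ) ≤ |(finProdFinEquiv (t, s) : ℕ) - ((finProdFinEquiv (j, l) : ℕ) : ℝ)| := by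
    have : (1 : ℤ) ≤ |(finProdFinEquiv (t, s) : ℕ) - ((finProdFinEquiv (j, l) : ℕ) : ℤ)| :=
      Int.one_le_abs (sub_ne_zero.2 (by exact_mod_cast hmn))
    exact_mod_cast this
  rw [gC_eq, gC_eq, add_sub_add_left_eq_sub, ← sub_mul, add_sub_add_right_eq_sub, abs_mul,
    abs_of_nonneg hδ]
  exact le_mul_of_one_le_left hδ hgap

variable {μ : Fin K → Fin K' → ℝ} {σ2 : ℝ}

/-- Within `3L/(10K')` of the centre `c_{jl}`, every other Gaussian is smaller than the
`(j,l)`-th one by the factor `exp (-K'/30)`: the distances to `μ_{jl}` and `μ_{ts}` are at most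
`7L/(15K')` and at least `8L/(15K')`, and `(8² - 7²)/15² = 1/15`. -/
lemma exp_gaussian_le_of_ne (hab : a ≤ b)
    (hμ : ∀ j l, |μ j l - gC a b K K' j l| ≤ gL a b K / (6 * K')) (hσ : 0 < σ2)
    (hσu : σ2 ≤ gL a b K ^ 2 / (K' : ℝ) ^ 3) {x : ℝ} {t j : Fin K} {s l : Fin K'}
    (hx : |x - gC a b K K' j l| ≤ 3 * (gL a b K / K') / 10) (hne : (t, s) ≠ (j, l)) :
    exp (-(x - μ t s) ^ 2 / (2 * σ2)) ≤
      exp (-(K' : ℝ) / 30) * exp (-(x - μ j l) ^ 2 / (2 * σ2)) := by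
  have hK' : (K' : ℝ) ≠ 0 := Nat.cast_ne_zero.2 s.pos.ne'
  have hσδ : K' * σ2 ≤ (gL a b K / K') ^ 2 :=
    calc K' * σ2 ≤ K' * (gL a b K ^ 2 / (K' : ℝ) ^ 3) := by gcongr
      _ = (gL a b K / K') ^ 2 := by field_simp
  have hsep := gL_div_le_abs_gC_sub hab hne
  set δ := gL a b K / K'
  have hδ6 : gL a b K / (6 * K') = δ / 6 := by rw [mul_comm, ← div_div]
  have hnear : |x - μ j l| ≤ 7 * δ / 15 := by
    have h₁ := abs_sub_le x (gC a b K K' j l) (μ j l)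
    have h₂ := hμ j l
    rw [abs_sub_comm, hδ6] at h₂
    linarith
  have hfar : 8 * δ / 15 ≤ |x - μ t s| := by
    have h₁ := abs_sub_le (gC a b K K' t s) (μ t s) (gC a b K K' j l)
    have h₂ := abs_sub_le (μ t s) x (gC a b K K' j l)
    have h₃ := hμ t s
    rw [abs_sub_comm (gC a b K K' t s) (μ t s)] at h₁
    rw [abs_sub_comm (μ t s) x] at h₂
    rw [hδ6] at h₃
    linarith
  have hδ : 0 ≤ δ := by unfold δ gL; have := sub_nonneg.2 hab; positivity
  have hnear2 : (x - μ j l) ^ 2 ≤ (7 * δ / 15) ^ 2 := by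
    rw [← sq_abs]; exact pow_le_pow_left₀ (abs_nonneg _) hnear 2
  have hfar2 : (8 * δ / 15) ^ 2 ≤ (x - μ t s) ^ 2 := by
    rw [← sq_abs (x - μ t s)]; exact pow_le_pow_left₀ (by positivity) hfar 2
  calc exp (-(x - μ t s) ^ 2 / (2 * σ2))
      ≤ exp (-(K' * σ2 / 15) / (2 * σ2)) * exp (-(x - μ j l) ^ 2 / (2 * σ2)) :=
        exp_neg_sq_div_le hσ (by linarith)
    _ = exp (-(K' : ℝ) / 30) * exp (-(x - μ j l) ^ 2 / (2 * σ2)) := by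
        congr 2; field_simp; ring

lemma abs_gPi_sub_one_le (hab : a ≤ b)
    (hμ : ∀ j l, |μ j l - gC a b K K' j l| ≤ gL a b K / (6 * K')) (hσ : 0 < σ2)
    (hσu : σ2 ≤ gL a b K ^ 2 / (K' : ℝ) ^ 3) {j : Fin K} {l : Fin K'} {x : ℝ}
    (hx : x ∈ Set.Ioc (gA a b K K' j l + gL a b K / (5 * K'))
      (gA a b K K' j l + gL a b K / K' - gL a b K / (5 * K'))) :
    |gPi a b K K' μ σ2 j l x - 1| ≤ K * K' * exp (-(K' : ℝ) / 30) := by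
  have hxc : |x - gC a b K K' j l| ≤ 3 * (gL a b K / K') / 10 := by
    rw [mul_comm, ← div_div] at hx
    rw [gC, mul_comm, ← div_div, abs_le]
    constructor <;> linarith [hx.1, hx.2]
  have := abs_div_sum_sub_one_le
    (w := fun p : Fin K × Fin K' => exp (-(x - μ p.1 p.2) ^ 2 / (2 * σ2)))
    (fun _ => exp_pos _) (j, l) (exp_pos _).le
    fun p hp => exp_gaussian_le_of_ne hab hμ hσ hσu hxc hp
  simpa [gPi, Fintype.sum_prod_type, mul_assoc] using this

end Grid

theorem stmt6_general (a b : ℝ) (hab : a < b) (K K' : ℕ)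
    (μ : Fin K → Fin K' → ℝ)
    (hμ : ∀ j l, |μ j l - gC a b K K' j l| ≤ gL a b K / (6 * K'))
    (σ2 : ℝ) (hσl : gL a b K ^ 2 / (2 * (K' : ℝ) ^ 3) ≤ σ2)
    (hσu : σ2 ≤ gL a b K ^ 2 / (K' : ℝ) ^ 3) :
    ∀ (j : Fin K) (l : Fin K'),
      (∫ x in Set.Ioc (gA a b K K' j l + gL a b K / (5 * K'))
          (gA a b K K' j l + gL a b K / K' - gL a b K / (5 * K')),
        |gPi a b K K' μ σ2 j l x - 1|)
        ≤ gL a b K * K * Real.exp (-(K' : ℝ) / 30) := by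
  intro j l
  have hK : (0 : ℝ) < K := Nat.cast_pos.2 j.pos
  have hK' : (0 : ℝ) < K' := Nat.cast_pos.2 l.pos
  have hL : 0 < gL a b K := div_pos (sub_pos.2 hab) hK
  have hσ : 0 < σ2 := lt_of_lt_of_le (by positivity) hσl
  have hlen : gA a b K K' j l + gL a b K / K' - gL a b K / (5 * K') -
      (gA a b K K' j l + gL a b K / (5 * K')) = 3 / 5 * (gL a b K / K') := by
    field_simp; ring
  calc _ ≤ K * K' * exp (-(K' : ℝ) / 30) * (3 / 5 * (gL a b K / K')) := by
        rw [← hlen]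
        refine setIntegral_Ioc_le_mul_of_abs_le (by linarith [hlen, div_pos hL hK'])
          fun x hx => ?_
        rw [abs_abs]
        exact abs_gPi_sub_one_le hab.le hμ hσ hσu hx
    _ = 3 / 5 * (gL a b K * K * exp (-(K' : ℝ) / 30)) := by field_simp
    _ ≤ gL a b K * K * exp (-(K' : ℝ) / 30) := by
        have : 0 ≤ gL a b K * K * exp (-(K' : ℝ) / 30) := by positivity
        linarith

theorem stmt6 (a b : ℝ) (hab : a < b) (K K' : ℕ) (hK : 0 < K) (hK' : 0 < K')
    (μ : Fin K → Fin K' → ℝ)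
    (hμ : ∀ j l, |μ j l - gC a b K K' j l| ≤ gL a b K / (6 * K'))
    (σ2 : ℝ) (hσl : gL a b K ^ 2 / (2 * (K' : ℝ) ^ 3) ≤ σ2)
    (hσu : σ2 ≤ gL a b K ^ 2 / (K' : ℝ) ^ 3) :
    ∀ (j : Fin K) (l : Fin K'),
      (∫ x in Set.Ioc (gA a b K K' j l + gL a b K / (5 * K'))
          (gA a b K K' j l + gL a b K / K' - gL a b K / (5 * K')),
        |gPi a b K K' μ σ2 j l x - 1|)
        ≤ gL a b K * K * Real.exp (-(K' : ℝ) / 30) :=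
  stmt6_general a b hab K K' μ hμ σ2 hσl hσu
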